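/- Every stratified ASP program, possibly including constraints (rules with empty head), admits at most one answer set. -/

import Mathlib

/- A formalization of Answer Set Programming (ASP):
   non-ground programs, grounding, interpretations, stable models,
   dependency graphs, stratification, compilable subprograms,
   and splitting sets for ground programs. -/

namespace ASP

/-- A term is a variable or a constant. -/
inductive Term where
  | var : ℕ → Term
  | const : ℕ → Term

/-- A (non-ground) atom `p(t1,...,tk)`. -/
structure Atom where
  pred : ℕ
  args : List Term

/-- A literal: an atom or a negated atom. -/
inductive Lit where
  | pos : Atom → Lit
  | neg : Atom → Lit

/-- A rule `h1 | ... | hn :- b1, ..., bm`. -/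
structure Rule where
  head : List Atom
  body : List Lit

/-- An ASP program is a set of rules (finiteness is stated as a hypothesis). -/
abbrev Program := Set Rule

/-- A ground atom. -/
structure GAtom where
  pred : ℕ
  args : List ℕ

/-- A ground literal. -/
inductive GLit where
  | pos : GAtom → GLit
  | neg : GAtom → GLit

/-- A ground rule. -/
structure GRule where
  head : List GAtom
  body : List GLit

/-- A ground program. -/
abbrev GProgram := Set GRule

/-- The atom of a literal. -/
def Lit.atom : Lit → Atom
  | .pos a => a
  | .neg a => a

/-- The atom of a ground literal. -/
def GLit.atom : GLit → GAtom
  | .pos a => a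
  | .neg a => a

/-- Whether a ground literal is positive. -/
def GLit.isPos : GLit → Bool
  | .pos _ => true
  | .neg _ => false

/-- The atoms occurring in a rule (head or body). -/
def Rule.atoms (r : Rule) : Set Atom :=
  {a | a ∈ r.head ∨ ∃ l ∈ r.body, l.atom = a}

/-- The variables occurring in a rule. -/
def Rule.vars (r : Rule) : Set ℕ :=
  {v | ∃ a ∈ r.atoms, Term.var v ∈ a.args}

/-- The Herbrand universe of a program: the constants occurring in it. -/
def herbrandU (π : Program) : Set ℕ :=
  {c | ∃ r ∈ π, ∃ a ∈ r.atoms, Term.const c ∈ a.args}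

/-- The predicate symbols occurring in a program. -/
def preds (π : Program) : Set ℕ :=
  {p | ∃ r ∈ π, ∃ a ∈ r.atoms, a.pred = p}

/-- The predicate symbols occurring in heads of rules of a program. -/
def headPreds (π : Program) : Set ℕ :=
  {p | ∃ r ∈ π, ∃ a ∈ r.head, a.pred = p}

/-- The Herbrand base of a program: ground atoms built from predicate
    symbols of the program and constants of its Herbrand universe. -/
def herbrandB (π : Program) : Set GAtom :=
  {ga | ga.pred ∈ preds π ∧ ∀ c ∈ ga.args, c ∈ herbrandU π}

/-- Applying a substitution (from variables to constants) to a term. -/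
def Term.subst (σ : ℕ → ℕ) : Term → ℕ
  | .var v => σ v
  | .const c => c

/-- Applying a substitution to an atom. -/
def Atom.ground (σ : ℕ → ℕ) (a : Atom) : GAtom :=
  ⟨a.pred, a.args.map (Term.subst σ)⟩

/-- Applying a substitution to a literal. -/
def Lit.ground (σ : ℕ → ℕ) : Lit → GLit
  | .pos a => .pos (a.ground σ)
  | .neg a => .neg (a.ground σ)

/-- Applying a substitution to a rule. -/
def Rule.ground (σ : ℕ → ℕ) (r : Rule) : GRule :=
  ⟨r.head.map (Atom.ground σ), r.body.map (Lit.ground σ)⟩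

/-- `Ground(π)`: all ground instances of rules of `π`, substituting the
    variables by constants of the Herbrand universe of `π`. -/
def groundProg (π : Program) : GProgram :=
  {gr | ∃ r ∈ π, ∃ σ : ℕ → ℕ, (∀ v ∈ r.vars, σ v ∈ herbrandU π) ∧ gr = r.ground σ}

/-- `I⁺`: the set of atoms occurring positively in `I`. -/
def plus (I : Set GLit) : Set GAtom := {a | GLit.pos a ∈ I}

/-- An interpretation over a set `B` of ground atoms: a set of ground literals
    over `B` containing, for each `a ∈ B`, exactly one of `a` and `∼a`. -/
def IsInterp (B : Set GAtom) (I : Set GLit) : Prop :=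
  (∀ l ∈ I, l.atom ∈ B) ∧
  ∀ a ∈ B, (GLit.pos a ∈ I ∧ GLit.neg a ∉ I) ∨ (GLit.neg a ∈ I ∧ GLit.pos a ∉ I)

/-- `I` is a model of a ground program: whenever all body literals of a rule
    are true in `I`, some head atom is true in `I`. -/
def IsModelG (P : GProgram) (I : Set GLit) : Prop :=
  ∀ r ∈ P, (∀ l ∈ r.body, l ∈ I) → ∃ a ∈ r.head, GLit.pos a ∈ I

/-- The reduct `P^I`: delete rules containing a negative body literal `∼a`
    with `a ∈ I⁺`, and delete negative body literals from remaining rules. -/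
def reductG (P : GProgram) (I : Set GLit) : GProgram :=
  {r' | ∃ r ∈ P, (∀ a, GLit.neg a ∈ r.body → a ∉ plus I) ∧
        r' = ⟨r.head, r.body.filter GLit.isPos⟩}

/-- `I` is a stable model (answer set) of the non-ground program `π`. -/
def IsAnswerSet (π : Program) (I : Set GLit) : Prop :=
  IsInterp (herbrandB π) I ∧ IsModelG (groundProg π) I ∧
  ¬ ∃ J, IsInterp (herbrandB π) J ∧ IsModelG (reductG (groundProg π) I) J ∧
         plus J ⊂ plus I

/-- Positive edge of the dependency graph `DG_π`: from a predicate of a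
    positive body literal to a predicate of the head. -/
def posEdge (π : Program) (p q : ℕ) : Prop :=
  ∃ r ∈ π, (∃ a, Lit.pos a ∈ r.body ∧ a.pred = p) ∧ ∃ b ∈ r.head, b.pred = q

/-- Negative edge of the dependency graph `DG_π`: from a predicate of a
    negative body literal to a predicate of the head, or between (the
    predicates of) two distinct atom occurrences in a disjunctive head. -/
def negEdge (π : Program) (p q : ℕ) : Prop :=
  (∃ r ∈ π, (∃ a, Lit.neg a ∈ r.body ∧ a.pred = p) ∧ ∃ b ∈ r.head, b.pred = q) ∨
  (∃ r ∈ π, ∃ i j : Fin r.head.length, i ≠ j ∧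
      (r.head.get i).pred = p ∧ (r.head.get j).pred = q)

/-- Any edge of the dependency graph. -/
def edge (π : Program) (p q : ℕ) : Prop := posEdge π p q ∨ negEdge π p q

/-- `π` is stratified iff `DG_π` has no cycle containing a negative edge. -/
def Stratified (π : Program) : Prop :=
  ¬ ∃ p q, negEdge π p q ∧ Relation.ReflTransGen (edge π) q p

/-- `λ` is compilable w.r.t. `π`: `λ ⊆ π`, `λ` is stratified, and no predicate
    occurring in a head of `λ` occurs anywhere in `π ∖ λ`. -/
def Compilable (π lam : Program) : Prop :=
  lam ⊆ π ∧ Stratified lam ∧ ∀ p ∈ headPreds lam, p ∉ preds (π \ lam)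

/-- A ground atom viewed as a (non-ground) atom. -/
def GAtom.toAtom (a : GAtom) : Atom := ⟨a.pred, a.args.map Term.const⟩

/-- `{f. | f ∈ S}`: the program consisting of each atom of `S` as a fact. -/
def factsProg (S : Set GAtom) : Program :=
  {r | ∃ a ∈ S, r = ⟨[a.toAtom], []⟩}

/-- The atoms occurring in a ground rule (head or body). -/
def GRule.atoms (r : GRule) : Set GAtom :=
  {a | a ∈ r.head ∨ ∃ l ∈ r.body, l.atom = a}

/-- The Herbrand base of a ground program: the atoms occurring in it. -/
def gAtoms (P : GProgram) : Set GAtom :=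
  {a | ∃ r ∈ P, a ∈ r.atoms}

/-- `I` is a stable model of the ground program `P`. -/
def IsStableG (P : GProgram) (I : Set GLit) : Prop :=
  IsInterp (gAtoms P) I ∧ IsModelG P I ∧
  ¬ ∃ J, IsInterp (gAtoms P) J ∧ IsModelG (reductG P I) J ∧ plus J ⊂ plus I

/-- Positive edge of the dependency graph of a ground program. -/
def posEdgeG (P : GProgram) (p q : ℕ) : Prop :=
  ∃ r ∈ P, (∃ a, GLit.pos a ∈ r.body ∧ a.pred = p) ∧ ∃ b ∈ r.head, b.pred = q

/-- Negative edge of the dependency graph of a ground program. -/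
def negEdgeG (P : GProgram) (p q : ℕ) : Prop :=
  ∃ r ∈ P, (∃ a, GLit.neg a ∈ r.body ∧ a.pred = p) ∧ ∃ b ∈ r.head, b.pred = q

/-- A ground program is stratified iff its dependency graph has no cycle
    containing a negative edge. -/
def StratifiedG (P : GProgram) : Prop :=
  ¬ ∃ p q, negEdgeG P p q ∧
      Relation.ReflTransGen (fun x y => posEdgeG P x y ∨ negEdgeG P x y) q p

/-- `U` is a splitting set for `P`: every rule with a head atom in `U`
    has all of its atoms in `U`. -/
def splittingSet (P : GProgram) (U : Set GAtom) : Prop :=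
  ∀ r ∈ P, (∃ a ∈ r.head, a ∈ U) → ∀ a ∈ r.atoms, a ∈ U

/-- `b_U(P)`: the rules of `P` all of whose atoms are in `U`. -/
def bottomProg (P : GProgram) (U : Set GAtom) : GProgram :=
  {r | r ∈ P ∧ ∀ a ∈ r.atoms, a ∈ U}

open Classical in
/-- Remove from a list of ground literals those whose atom is in `U`. -/
noncomputable def removeU (U : Set GAtom) : List GLit → List GLit
  | [] => []
  | l :: ls => if l.atom ∈ U then removeU U ls else l :: removeU U ls

/-- `e_U(P, X)`: partial evaluation of `P` w.r.t. `U` and `X ⊆ U`: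
    delete every rule with a positive body literal over an atom of `U` not in
    `X`, or a negative body literal over an atom of `U` in `X`; delete all
    remaining body literals over atoms of `U` from the surviving rules. -/
def topEval (P : GProgram) (U X : Set GAtom) : GProgram :=
  {r' | ∃ r ∈ P,
    (∀ a, GLit.pos a ∈ r.body → a ∈ U → a ∈ X) ∧
    (∀ a, GLit.neg a ∈ r.body → a ∈ U → a ∉ X) ∧
    r' = ⟨r.head, removeU U r.body⟩}

end ASP

open ASP

/-
In a stratified program no head is disjunctive and every predicate gets a level, the number of
predicates strictly below it in the dependency graph, which does not decrease along positive
edges and strictly increases along negative ones. The positive part `M⁺` of an answer set `M` is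
the least fixed point of the immediate-consequence operator of the reduct `Ground(π)^M`. Its
restriction to atoms of level `≤ k` is the least fixed point of the operator cut down to those
atoms, and that operator only consults `M⁺` on atoms of level `< k` (through negative body
literals). By induction on `k`, two answer sets therefore have the same positive part.
-/

theorem List.eq_of_mem_of_length_le_one {α : Type*} {l : List α} {a b : α}
    (hl : l.length ≤ 1) (ha : a ∈ l) (hb : b ∈ l) : a = b := by
  match l, hl with
  | [_], _ => rw [List.mem_singleton] at ha hb; rw [ha, hb]

theorem OrderHom.lfp_inf_eq_lfp_inf_const {α : Type*} [CompleteBooleanAlgebra α] (f : α →o α)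
    (s : α) (hs : ∀ x, f x ⊓ s ≤ f (x ⊓ s)) :
    lfp f ⊓ s = lfp (f ⊓ OrderHom.const α s) := by
  set K := lfp (f ⊓ OrderHom.const α s)
  have hK : f K ⊓ s = K := (f ⊓ OrderHom.const α s).map_lfp
  have hKs : (K ⊔ sᶜ) ⊓ s ≤ K := by
    rw [inf_sup_right, compl_inf_self, sup_bot_eq]
    exact inf_le_left
  apply le_antisymm
  · suffices lfp f ≤ K ⊔ sᶜ from (inf_le_inf_right s this).trans hKs
    apply lfp_le
    calc f (K ⊔ sᶜ) = (f (K ⊔ sᶜ) ⊓ s) ⊔ (f (K ⊔ sᶜ) ⊓ sᶜ) := by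
          rw [← inf_sup_left, sup_compl_eq_top, inf_top_eq]
      _ ≤ (f K ⊓ s) ⊔ sᶜ :=
          sup_le_sup (le_inf ((hs _).trans (f.monotone hKs)) inf_le_right) inf_le_right
      _ = K ⊔ sᶜ := by rw [hK]
  · exact lfp_le _ (inf_le_inf_right s ((f.monotone inf_le_left).trans_eq f.map_lfp))

section Level

variable {α : Type*} (r : α → α → Prop) (s : Set α)

noncomputable def level (p : α) : ℕ :=
  {x ∈ s | Relation.ReflTransGen r x p ∧ ¬ Relation.ReflTransGen r p x}.ncard

variable {r s}

theorem level_le_level (hs : s.Finite) {p q : α} (h : Relation.ReflTransGen r p q) :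
    level r s p ≤ level r s q := by
  refine Set.ncard_le_ncard ?_ (hs.subset fun x hx => hx.1)
  rintro x ⟨hx, hxp, hpx⟩
  exact ⟨hx, hxp.trans h, fun hqx => hpx (h.trans hqx)⟩

theorem level_lt_level (hs : s.Finite) {p q : α} (hp : p ∈ s) (hpq : Relation.ReflTransGen r p q)
    (hqp : ¬ Relation.ReflTransGen r q p) : level r s p < level r s q := by
  refine Set.ncard_lt_ncard ⟨fun x hx => ?_, fun hsub => ?_⟩ (hs.subset fun x hx => hx.1)
  · obtain ⟨hx, hxp, hpx⟩ := hx
    exact ⟨hx, hxp.trans hpq, fun hqx => hpx (hpq.trans hqx)⟩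
  · exact (hsub ⟨hp, hpq, hqp⟩).2.2 Relation.ReflTransGen.refl

end Level

namespace ASP

theorem finite_preds {π : Program} (hfin : π.Finite) : (preds π).Finite := by
  have hatoms (r : Rule) : r.atoms.Finite :=
    (r.head.finite_toSet.union (r.body.map Lit.atom).finite_toSet).subset <| by
      rintro a (h | ⟨l, hl, rfl⟩)
      exacts [Or.inl h, Or.inr (List.mem_map_of_mem hl)]
  refine (hfin.biUnion fun r _ => (hatoms r).image Atom.pred).subset ?_
  rintro p ⟨r, hr, a, ha, rfl⟩
  exact Set.mem_biUnion hr ⟨a, ha, rfl⟩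

theorem mem_preds_of_negEdge {π : Program} {p q : ℕ} (h : negEdge π p q) : p ∈ preds π := by
  rcases h with ⟨r, hr, ⟨a, ha, rfl⟩, _⟩ | ⟨r, hr, i, _, _, rfl, _⟩
  · exact ⟨r, hr, a, Or.inr ⟨.neg a, ha, rfl⟩, rfl⟩
  · exact ⟨r, hr, _, Or.inl (List.get_mem _ _), rfl⟩

/-- Two head atoms of one rule are joined by negative edges in both directions. -/
theorem Stratified.length_head_le_one {π : Program} (hstrat : Stratified π) {r : Rule}
    (hr : r ∈ π) : r.head.length ≤ 1 := by
  by_contra! hlen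
  let i : Fin r.head.length := ⟨0, by omega⟩
  let j : Fin r.head.length := ⟨1, hlen⟩
  have hij : i ≠ j := by simp [i, j, Fin.ext_iff]
  exact hstrat ⟨_, _, Or.inr ⟨r, hr, i, j, hij, rfl, rfl⟩,
    .single (Or.inr (Or.inr ⟨r, hr, j, i, hij.symm, rfl, rfl⟩))⟩

section Ground

variable {π : Program} {gr : GRule}

theorem mem_herbrandB_of_mem_groundProg (hgr : gr ∈ groundProg π) {a : GAtom}
    (ha : a ∈ gr.atoms) : a ∈ herbrandB π := by
  obtain ⟨r, hr, σ, hσ, rfl⟩ := hgr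
  obtain ⟨b, hb, rfl⟩ : ∃ b ∈ r.atoms, a = b.ground σ := by
    rcases ha with h | ⟨_, hl, rfl⟩
    · obtain ⟨b, hb, rfl⟩ := List.mem_map.1 h
      exact ⟨b, Or.inl hb, rfl⟩
    · obtain ⟨l, hlr, rfl⟩ := List.mem_map.1 hl
      exact ⟨l.atom, Or.inr ⟨l, hlr, rfl⟩, by cases l <;> rfl⟩
  refine ⟨⟨r, hr, b, hb, rfl⟩, fun c hc => ?_⟩
  obtain ⟨t, ht, rfl⟩ := List.mem_map.1 hc
  cases t with
  | var v => exact hσ v ⟨b, hb, ht⟩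
  | const c => exact ⟨r, hr, b, hb, ht⟩

theorem length_head_le_one_of_mem_groundProg (hnormal : ∀ r ∈ π, r.head.length ≤ 1)
    (hgr : gr ∈ groundProg π) : gr.head.length ≤ 1 := by
  obtain ⟨r, hr, σ, -, rfl⟩ := hgr
  simpa [Rule.ground] using hnormal r hr

theorem posEdge_of_mem_groundProg (hgr : gr ∈ groundProg π) {h a : GAtom}
    (hh : h ∈ gr.head) (ha : GLit.pos a ∈ gr.body) : posEdge π a.pred h.pred := by
  obtain ⟨r, hr, σ, -, rfl⟩ := hgr
  obtain ⟨b, hb, rfl⟩ := List.mem_map.1 hh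
  obtain ⟨l, hl, hla⟩ := List.mem_map.1 ha
  cases l with
  | pos c => cases hla; exact ⟨r, hr, ⟨c, hl, rfl⟩, b, hb, rfl⟩
  | neg c => cases hla

theorem negEdge_of_mem_groundProg (hgr : gr ∈ groundProg π) {h a : GAtom}
    (hh : h ∈ gr.head) (ha : GLit.neg a ∈ gr.body) : negEdge π a.pred h.pred := by
  obtain ⟨r, hr, σ, -, rfl⟩ := hgr
  obtain ⟨b, hb, rfl⟩ := List.mem_map.1 hh
  obtain ⟨l, hl, hla⟩ := List.mem_map.1 ha
  cases l with
  | pos c => cases hla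
  | neg c => cases hla; exact Or.inl ⟨r, hr, ⟨c, hl, rfl⟩, b, hb, rfl⟩

end Ground

noncomputable def stratum (π : Program) (a : GAtom) : ℕ := level (edge π) (preds π) a.pred

section Stratum

variable {π : Program} {gr : GRule} {h a : GAtom}

theorem stratum_le_of_pos_mem_body (hfin : π.Finite) (hgr : gr ∈ groundProg π)
    (hh : h ∈ gr.head) (ha : GLit.pos a ∈ gr.body) : stratum π a ≤ stratum π h :=
  level_le_level (finite_preds hfin) (.single (Or.inl (posEdge_of_mem_groundProg hgr hh ha)))

theorem stratum_lt_of_neg_mem_body (hfin : π.Finite) (hstrat : Stratified π)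
    (hgr : gr ∈ groundProg π) (hh : h ∈ gr.head) (ha : GLit.neg a ∈ gr.body) :
    stratum π a < stratum π h := by
  have hedge := negEdge_of_mem_groundProg hgr hh ha
  exact level_lt_level (finite_preds hfin) (mem_preds_of_negEdge hedge)
    (.single (Or.inr hedge)) fun hback => hstrat ⟨_, _, hedge, hback⟩

end Stratum

/-- The immediate-consequence operator of the reduct `P^I`, where `I⁺ = A`. -/
def consequence (P : GProgram) (A : Set GAtom) : Set GAtom →o Set GAtom where
  toFun X := {h | ∃ r ∈ P, h ∈ r.head ∧ (∀ a, GLit.neg a ∈ r.body → a ∉ A) ∧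
    ∀ a, GLit.pos a ∈ r.body → a ∈ X}
  monotone' _ _ hXY := fun _ ⟨r, hr, hh, hneg, hpos⟩ =>
    ⟨r, hr, hh, hneg, fun a ha => hXY (hpos a ha)⟩

section Consequence

variable {π : Program} (hfin : π.Finite)
include hfin

theorem lfp_consequence_inter_stratum (A : Set GAtom) (k : ℕ) :
    OrderHom.lfp (consequence (groundProg π) A) ∩ {a | stratum π a ≤ k} =
      OrderHom.lfp (consequence (groundProg π) A ⊓ OrderHom.const _ {a | stratum π a ≤ k}) := by
  refine OrderHom.lfp_inf_eq_lfp_inf_const _ _ fun X h ⟨⟨r, hr, hh, hneg, hpos⟩, hk⟩ =>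
    ⟨r, hr, hh, hneg, fun a ha => ⟨hpos a ha, ?_⟩⟩
  exact (stratum_le_of_pos_mem_body hfin hr hh ha).trans hk

theorem consequence_inf_stratum_congr (hstrat : Stratified π) {A B : Set GAtom} {k : ℕ}
    (hAB : ∀ a, stratum π a < k → (a ∈ A ↔ a ∈ B)) :
    consequence (groundProg π) A ⊓ OrderHom.const _ {a | stratum π a ≤ k} =
      consequence (groundProg π) B ⊓ OrderHom.const _ {a | stratum π a ≤ k} := by
  have hsub {A B : Set GAtom} (hAB : ∀ a, stratum π a < k → (a ∈ A ↔ a ∈ B)) (X : Set GAtom) :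
      consequence (groundProg π) A X ∩ {a | stratum π a ≤ k} ⊆
        consequence (groundProg π) B X ∩ {a | stratum π a ≤ k} := by
    rintro h ⟨⟨r, hr, hh, hneg, hpos⟩, hk⟩
    refine ⟨⟨r, hr, hh, fun a ha haB => hneg a ha ?_, hpos⟩, hk⟩
    exact (hAB a ((stratum_lt_of_neg_mem_body hfin hstrat hr hh ha).trans_le hk)).2 haB
  refine OrderHom.ext _ _ (funext fun X => ?_)
  exact (hsub hAB X).antisymm (hsub (fun a ha => (hAB a ha).symm) X)

end Consequence

section Interp

variable {B : Set GAtom} {I J : Set GLit}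

theorem IsInterp.neg_mem_iff (hI : IsInterp B I) {a : GAtom} :
    GLit.neg a ∈ I ↔ a ∈ B ∧ a ∉ plus I := by
  refine ⟨fun h => ⟨hI.1 _ h, fun hp => ?_⟩, fun ⟨haB, ha⟩ => ?_⟩
  · rcases hI.2 a (hI.1 _ h) with h' | h'
    exacts [h'.2 h, h'.2 hp]
  · exact ((hI.2 a haB).resolve_left fun h' => ha h'.1).1

theorem IsInterp.ext_plus (hI : IsInterp B I) (hJ : IsInterp B J) (h : plus I = plus J) :
    I = J := by
  ext (a | a)
  · exact Set.ext_iff.1 h a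
  · rw [hI.neg_mem_iff, hJ.neg_mem_iff, h]

theorem IsInterp.mem_of_mem_body (hI : IsInterp B I) {r : GRule} (hB : r.atoms ⊆ B)
    (hpos : ∀ a, GLit.pos a ∈ r.body → a ∈ plus I)
    (hneg : ∀ a, GLit.neg a ∈ r.body → a ∉ plus I) : ∀ l ∈ r.body, l ∈ I
  | .pos a, hl => hpos a hl
  | .neg a, hl => hI.neg_mem_iff.2 ⟨hB (Or.inr ⟨_, hl, rfl⟩), hneg a hl⟩

def interpOfPlus (B L : Set GAtom) : Set GLit := GLit.pos '' L ∪ GLit.neg '' (B \ L)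

theorem plus_interpOfPlus (L : Set GAtom) : plus (interpOfPlus B L) = L := by
  ext a
  simp [plus, interpOfPlus]

theorem isInterp_interpOfPlus {L : Set GAtom} (hL : L ⊆ B) : IsInterp B (interpOfPlus B L) := by
  refine ⟨?_, fun a haB => ?_⟩
  · rintro _ (⟨a, ha, rfl⟩ | ⟨a, ha, rfl⟩)
    exacts [hL ha, ha.1]
  · by_cases ha : a ∈ L <;> simp [interpOfPlus, ha, haB]

end Interp

theorem IsAnswerSet.plus_eq_lfp {π : Program} {M : Set GLit} (hM : IsAnswerSet π M)
    (hnormal : ∀ r ∈ π, r.head.length ≤ 1) :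
    plus M = OrderHom.lfp (consequence (groundProg π) (plus M)) := by
  set T := consequence (groundProg π) (plus M)
  have hbody {r : GRule} (hr : r ∈ groundProg π) (hneg : ∀ a, GLit.neg a ∈ r.body → a ∉ plus M)
      (hpos : ∀ a, GLit.pos a ∈ r.body → a ∈ plus M) : ∃ b ∈ r.head, b ∈ plus M :=
    hM.2.1 r hr (hM.1.mem_of_mem_body (fun _ => mem_herbrandB_of_mem_groundProg hr) hpos hneg)
  have hLM : OrderHom.lfp T ⊆ plus M := OrderHom.lfp_le T fun h ⟨r, hr, hh, hneg, hpos⟩ => by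
    obtain ⟨b, hb, hbM⟩ := hbody hr hneg hpos
    rwa [List.eq_of_mem_of_length_le_one (length_head_le_one_of_mem_groundProg hnormal hr) hh hb]
  have hmodel : IsModelG (reductG (groundProg π) M)
      (interpOfPlus (herbrandB π) (OrderHom.lfp T)) := by
    rintro _ ⟨r, hr, hneg, rfl⟩ hbodyL
    have hpos (a) (ha : GLit.pos a ∈ r.body) : a ∈ OrderHom.lfp T := by
      simpa [plus_interpOfPlus] using
        show a ∈ plus (interpOfPlus _ _) from hbodyL _ (List.mem_filter.2 ⟨ha, rfl⟩)
    obtain ⟨b, hb, -⟩ := hbody hr hneg fun a ha => hLM (hpos a ha)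
    refine ⟨b, hb, ?_⟩
    show b ∈ plus (interpOfPlus _ _)
    rw [plus_interpOfPlus, ← T.map_lfp]
    exact ⟨r, hr, hb, hneg, hpos⟩
  by_contra hne
  refine hM.2.2 ⟨_, isInterp_interpOfPlus fun a ha => hM.1.1 _ (hLM ha), hmodel, ?_⟩
  rw [plus_interpOfPlus]
  exact hLM.ssubset_of_ne (Ne.symm hne)

end ASP

theorem statement3_general (π : Program) (hfin : π.Finite)
    (hstrat : Stratified π)
    (M N : Set GLit) (hM : IsAnswerSet π M) (hN : IsAnswerSet π N) :
    M = N := by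
  have hnormal (r) (hr : r ∈ π) := hstrat.length_head_le_one hr
  have hstrata (k : ℕ) : plus M ∩ {a | stratum π a ≤ k} = plus N ∩ {a | stratum π a ≤ k} := by
    induction k using Nat.strong_induction_on with
    | _ k ih =>
      have hbelow (a) (ha : stratum π a < k) : a ∈ plus M ↔ a ∈ plus N := by
        simpa using Set.ext_iff.1 (ih _ ha) a
      rw [hM.plus_eq_lfp hnormal, hN.plus_eq_lfp hnormal, lfp_consequence_inter_stratum hfin,
        lfp_consequence_inter_stratum hfin, consequence_inf_stratum_congr hfin hstrat hbelow]
  refine hM.1.ext_plus hN.1 (Set.ext fun a => ?_)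
  simpa using Set.ext_iff.1 (hstrata (stratum π a)) a

/-- every stratified ASP program (possibly including constraints)
admits at most one answer set. -/
theorem statement3 (π : Program) (hfin : π.Finite)
    (hrules : ∀ r ∈ π, r.head ≠ [] ∨ r.body ≠ [])
    (hstrat : Stratified π)
    (M N : Set GLit) (hM : IsAnswerSet π M) (hN : IsAnswerSet π N) :
    M = N :=
  statement3_general π hfin hstrat M N hM hN
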